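/- There exists a constant C > 0 (depending on d, r, p, A) such that for every x with r ≤ ‖x‖ ≤ 1 and every s ∈ (0, 1 − r], ∫_{B(x,2s)} f(y) dy ≤ C ∫_{B(x,s)} f(y) dy. (This doubling property yields condition (3), sup_x F(B(x, 2r̂_n(x))) = O((log n + β)/n), for this density.) -/

import Mathlib

/-! On `B(x, 2s)` the density is at most `A (‖x‖ - r + 2s)^p`. Inside `B(x, s)` there is a ball
of radius `s / 8`, centred on the ray through `x`, that stays in the annulus at distance at
least `(‖x‖ - r + 2s) / 6` from the inner sphere; there the density is at least `6⁻ᵖ` times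
that bound. The two balls have volume ratio `16^d`, so `6^p 16^d` is a doubling constant. -/

open MeasureTheory Metric Module

variable {E : Type*} [NormedAddCommGroup E]

noncomputable def annulusDensity (r A : ℝ) (p : ℕ) (y : E) : ℝ :=
  if r ≤ ‖y‖ ∧ ‖y‖ ≤ 1 then A * (‖y‖ - r) ^ p else 0

section Density

variable {r A : ℝ} {p : ℕ}

lemma annulusDensity_nonneg (hA : 0 ≤ A) (y : E) : 0 ≤ annulusDensity r A p y := by
  unfold annulusDensity
  split_ifs with hy
  · exact mul_nonneg hA (pow_nonneg (sub_nonneg.2 hy.1) p)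
  · exact le_rfl

lemma annulusDensity_le (hA : 0 ≤ A) {y : E} {t : ℝ} (hrt : r ≤ t) (hyt : ‖y‖ ≤ t) :
    annulusDensity r A p y ≤ A * (t - r) ^ p := by
  unfold annulusDensity
  split_ifs with hy
  · gcongr
    linarith [hy.1]
  · exact mul_nonneg hA (pow_nonneg (sub_nonneg.2 hrt) p)

lemma le_annulusDensity (hA : 0 ≤ A) {y : E} {m : ℝ} (hm : 0 ≤ m) (hy : r + m ≤ ‖y‖)
    (hy1 : ‖y‖ ≤ 1) : A * m ^ p ≤ annulusDensity r A p y := by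
  rw [annulusDensity, if_pos ⟨by linarith, hy1⟩]
  gcongr
  linarith

lemma integrable_annulusDensity [MeasurableSpace E] [BorelSpace E] [ProperSpace E]
    (μ : Measure E) [IsFiniteMeasureOnCompacts μ] :
    Integrable (annulusDensity r A p) μ := by
  set K : Set E := {y | r ≤ ‖y‖ ∧ ‖y‖ ≤ 1}
  have hK : IsClosed K :=
    (isClosed_le continuous_const continuous_norm).inter
      (isClosed_le continuous_norm continuous_const)
  have hKc : IsCompact K :=
    (isCompact_closedBall (0 : E) 1).of_isClosed_subset hK fun y hy => by simpa using hy.2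
  have : annulusDensity r A p = K.indicator fun y : E => A * (‖y‖ - r) ^ p := by
    ext y
    simp only [annulusDensity, Set.indicator_apply, K, Set.mem_ofPred_eq]
  rw [this, integrable_indicator_iff hK.measurableSet]
  have hcont : Continuous fun y : E => A * (‖y‖ - r) ^ p := by fun_prop
  exact hcont.continuousOn.integrableOn_compact hKc

end Density

variable [NormedSpace ℝ E]

lemma exists_norm_eq_dist_eq {x : E} (hx : x ≠ 0) {t : ℝ} (ht : 0 ≤ t) :
    ∃ c : E, ‖c‖ = t ∧ dist c x = |t - ‖x‖| := by
  have hx' : ‖x‖ ≠ 0 := norm_ne_zero_iff.2 hx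
  refine ⟨(t / ‖x‖) • x, ?_, ?_⟩
  · rw [norm_smul, Real.norm_of_nonneg (by positivity), div_mul_cancel₀ t hx']
  · rw [dist_eq_norm, show (t / ‖x‖) • x - x = ((t - ‖x‖) / ‖x‖) • x by
      rw [sub_div, div_self hx', sub_smul, one_smul],
      norm_smul, Real.norm_eq_abs, abs_div, abs_norm, div_mul_cancel₀ _ hx']

lemma exists_ball_subset_ball_forall_mem_annulus {r s : ℝ} {x : E} (hr : 0 < r)
    (hrx : r ≤ ‖x‖) (hx1 : ‖x‖ ≤ 1) (hs : 0 < s) (hs1 : s ≤ 1 - r) :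
    ∃ c : E, ball c (s / 8) ⊆ ball x s ∧
      ∀ y ∈ ball c (s / 8), r + (‖x‖ - r + 2 * s) / 6 ≤ ‖y‖ ∧ ‖y‖ ≤ 1 := by
  -- Centre the small ball on the ray through `x`, a distance `s / 4` inwards but at least
  -- `3 s / 4` beyond the inner sphere.
  obtain ⟨c, hc, hcx⟩ := exists_norm_eq_dist_eq (norm_pos_iff.1 (hr.trans_le hrx))
    (t := max (‖x‖ - s / 4) (r + 3 * s / 4)) (by positivity)
  have hcx' : dist c x ≤ 3 * s / 4 := by
    rw [hcx, abs_le]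
    constructor <;> cases max_cases (‖x‖ - s / 4) (r + 3 * s / 4) <;> linarith
  refine ⟨c, ball_subset_ball' (by linarith), fun y hy => ?_⟩
  have hyc := abs_le.1 ((abs_norm_sub_norm_le y c).trans (mem_ball_iff_norm.1 hy).le)
  constructor <;> cases max_cases (‖x‖ - s / 4) (r + 3 * s / 4) <;> linarith [hyc.1, hyc.2]

variable [MeasurableSpace E] [BorelSpace E] [FiniteDimensional ℝ E]
  (μ : Measure E) [μ.IsAddHaarMeasure]

lemma addHaar_real_ball_mul_of_pos (x y : E) {a : ℝ} (ha : 0 < a) (ρ : ℝ) :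
    μ.real (ball x (a * ρ)) = a ^ finrank ℝ E * μ.real (ball y ρ) := by
  rw [measureReal_def, measureReal_def, Measure.addHaar_ball_mul_of_pos μ x ha,
    ENNReal.toReal_mul, ENNReal.toReal_ofReal (by positivity), Measure.addHaar_ball_center μ y]

lemma setIntegral_ball_two_mul_annulusDensity_le {r A : ℝ} {p : ℕ} (hr : 0 < r) (hA : 0 ≤ A)
    {x : E} (hrx : r ≤ ‖x‖) (hx1 : ‖x‖ ≤ 1) {s : ℝ} (hs : 0 < s) (hs1 : s ≤ 1 - r) :
    ∫ y in ball x (2 * s), annulusDensity r A p y ∂μ ≤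
      6 ^ p * 16 ^ finrank ℝ E * ∫ y in ball x s, annulusDensity r A p y ∂μ := by
  set F : E → ℝ := annulusDensity r A p
  set M := ‖x‖ - r + 2 * s
  obtain ⟨c, hcx, hc⟩ := exists_ball_subset_ball_forall_mem_annulus hr hrx hx1 hs hs1
  have upper : ∫ y in ball x (2 * s), F y ∂μ ≤ A * M ^ p * μ.real (ball x (2 * s)) := by
    refine le_trans (Real.le_norm_self _) (norm_setIntegral_le_of_norm_le_const
      measure_ball_lt_top fun y hy => ?_)
    rw [Real.norm_of_nonneg (annulusDensity_nonneg hA y)]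
    have := (norm_sub_norm_le y x).trans (mem_ball_iff_norm.1 hy).le
    exact (annulusDensity_le hA (t := ‖x‖ + 2 * s) (by linarith) (by linarith)).trans_eq
      (by ring)
  have lower : A * (M / 6) ^ p * μ.real (ball c (s / 8)) ≤ ∫ y in ball c (s / 8), F y ∂μ :=
    setIntegral_ge_of_const_le_real measurableSet_ball measure_ball_lt_top.ne
      (fun y hy => le_annulusDensity hA (by positivity) (hc y hy).1 (hc y hy).2)
      (integrable_annulusDensity μ).integrableOn
  have mono : ∫ y in ball c (s / 8), F y ∂μ ≤ ∫ y in ball x s, F y ∂μ :=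
    setIntegral_mono_set (integrable_annulusDensity μ).integrableOn
      (.of_forall (annulusDensity_nonneg hA)) hcx.eventuallyLE
  have volume_eq : μ.real (ball x (2 * s)) = 16 ^ finrank ℝ E * μ.real (ball c (s / 8)) := by
    rw [← addHaar_real_ball_mul_of_pos μ x c (by norm_num : (0 : ℝ) < 16)]
    ring_nf
  calc ∫ y in ball x (2 * s), F y ∂μ
      ≤ A * M ^ p * μ.real (ball x (2 * s)) := upper
    _ = 6 ^ p * 16 ^ finrank ℝ E * (A * (M / 6) ^ p * μ.real (ball c (s / 8))) := by
      rw [volume_eq, div_pow]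
      field_simp
    _ ≤ 6 ^ p * 16 ^ finrank ℝ E * ∫ y in ball x s, F y ∂μ := by
      gcongr
      exact lower.trans mono

theorem annulus_density_doubling_general
    (d : ℕ) (r : ℝ) (hr0 : 0 < r)
    (p : ℕ) (A : ℝ) (hA : 0 < A)
    (f : EuclideanSpace ℝ (Fin d) → ℝ)
    (hf : ∀ y, f y = if r ≤ ‖y‖ ∧ ‖y‖ ≤ 1 then A * (‖y‖ - r) ^ p else 0) :
    ∃ C : ℝ, 0 < C ∧
      ∀ x : EuclideanSpace ℝ (Fin d), r ≤ ‖x‖ → ‖x‖ ≤ 1 →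
        ∀ s : ℝ, 0 < s → s ≤ 1 - r →
          ∫ y in Metric.ball x (2 * s), f y ≤ C * ∫ y in Metric.ball x s, f y := by
  obtain rfl : f = annulusDensity r A p := funext hf
  exact ⟨_, by positivity, fun x hrx hx1 s hs hs1 =>
    setIntegral_ball_two_mul_annulusDensity_le volume hr0 hA.le hrx hx1 hs hs1⟩

/-- doubling property, cf. eq. (34) of Iyer–Thacker: for the polynomially
vanishing annulus density `f(y) = A(‖y‖ − r)^p` for `r ≤ ‖y‖ ≤ 1` (and `0` otherwise) on
Euclidean `ℝ^d`, there is `C > 0` with `∫_{B(x,2s)} f ≤ C ∫_{B(x,s)} f` for every `x` in the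
annulus and every `0 < s ≤ 1 − r`.  This yields condition (3),
`sup_x F(B(x, 2r̂_n(x))) = O((log n + β)/n)`, for this density. -/
theorem annulus_density_doubling
    (d : ℕ) (hd : 1 ≤ d) (r : ℝ) (hr0 : 0 < r) (hr1 : r < 1)
    (p : ℕ) (hp : 1 ≤ p) (A : ℝ) (hA : 0 < A)
    (f : EuclideanSpace ℝ (Fin d) → ℝ)
    (hf : ∀ y, f y = if r ≤ ‖y‖ ∧ ‖y‖ ≤ 1 then A * (‖y‖ - r) ^ p else 0) :
    ∃ C : ℝ, 0 < C ∧
      ∀ x : EuclideanSpace ℝ (Fin d), r ≤ ‖x‖ → ‖x‖ ≤ 1 →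
        ∀ s : ℝ, 0 < s → s ≤ 1 - r →
          ∫ y in Metric.ball x (2 * s), f y ≤ C * ∫ y in Metric.ball x s, f y :=
  annulus_density_doubling_general d r hr0 p A hA f hf
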